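/- Assume W is nonzero. If c < a+b, then c is even; and if c > a+b, then a+b is even. -/

import Mathlib

open Polynomial

/-- `alpha l S` is the coefficient of `x^(deg S - l)` in `S`. -/
noncomputable def alpha (l : ℕ) (S : Polynomial (ZMod 2)) : ZMod 2 :=
  S.coeff (S.natDegree - l)

/-- `sigmaPow P n = 1 + P + ⋯ + P^n`, the sum of divisors of `P^n` for `P` irreducible. -/
noncomputable def sigmaPow (P : Polynomial (ZMod 2)) (n : ℕ) : Polynomial (ZMod 2) :=
  ∑ i ∈ Finset.range (n + 1), P ^ i

/-!
Let `N = 2h(a+b)`, the degree of both `U` and `σ(M^(2h))`. For `l ≤ a + b` the coefficient of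
`x^(N-l)` in `W` is `C(v, l) + C(2hb, l) + [l = a + b]`: in `σ(M^(2h)) = σ(M^(2h-1)) + M^(2h)` the
first summand is monic of degree `N - (a+b)`, and near the top `M^(2h) = (1 + T^2)^h` agrees with
`T^(2h)`, where `T = x^a(x+1)^b`. As `v` and `2hb` are even, both binomials vanish mod 2 for odd `l`
(Lucas). Hence if `c < a + b` were odd, the leading coefficient of `W` would vanish; and if `a + b`
were odd, the coefficient of `x^(N-(a+b))` in `W` would be `1`, so `c ≤ a + b`.
-/

lemma Nat.cast_choose_eq_zero_of_even_of_odd {n k : ℕ} (hn : Even n) (hk : Odd k) :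
    (n.choose k : ZMod 2) = 0 := by
  have := Choose.choose_modEq_choose_mod_mul_choose_div_nat (p := 2) (n := n) (k := k)
  rw [Nat.even_iff.mp hn, Nat.odd_iff.mp hk, Nat.choose_zero_succ, zero_mul] at this
  exact (ZMod.natCast_eq_zero_iff _ _).mpr (Nat.modEq_zero_iff_dvd.mp this)

section XPowMulXAddOnePow

variable {R : Type*} [Semiring R] {p q l : ℕ}

lemma coeff_X_pow_mul_X_add_one_pow_sub (hl : l ≤ p + q) :
    (X ^ p * (X + 1) ^ q : R[X]).coeff (p + q - l) = q.choose l := by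
  rcases le_or_gt l q with hlq | hlq
  · rw [show p + q - l = q - l + p by omega, coeff_X_pow_mul, coeff_X_add_one_pow,
      Nat.choose_symm hlq]
  · rw [coeff_X_pow_mul', if_neg (by omega), Nat.choose_eq_zero_of_lt hlq, Nat.cast_zero]

variable [Nontrivial R]

variable (R p q) in
lemma isMonicOfDegree_X_pow_mul_X_add_one_pow :
    IsMonicOfDegree (X ^ p * (X + 1) ^ q : R[X]) (p + q) := by
  simpa using (isMonicOfDegree_X_pow R p).mul ((isMonicOfDegree_X_add_one (1 : R)).pow q)

lemma isMonicOfDegree_one_add_X_pow_mul_X_add_one_pow (hpq : p + q ≠ 0) :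
    IsMonicOfDegree (1 + X ^ p * (X + 1) ^ q : R[X]) (p + q) :=
  (isMonicOfDegree_X_pow_mul_X_add_one_pow R p q).add_left (by rw [natDegree_one]; omega)

end XPowMulXAddOnePow

lemma natDegree_prod_one_add_X_pow_mul_X_add_one_pow {R ι : Type*} [CommSemiring R]
    [Nontrivial R] (s : Finset ι) (p q : ι → ℕ) (hpq : ∀ i ∈ s, p i + q i ≠ 0) :
    (∏ i ∈ s, (1 + X ^ p i * (X + 1) ^ q i : R[X])).natDegree = ∑ i ∈ s, (p i + q i) := by
  rw [natDegree_prod_of_monic _ _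
    fun i hi ↦ (isMonicOfDegree_one_add_X_pow_mul_X_add_one_pow (hpq i hi)).monic]
  exact Finset.sum_congr rfl fun i hi ↦
    (isMonicOfDegree_one_add_X_pow_mul_X_add_one_pow (hpq i hi)).natDegree_eq

lemma natDegree_one_add_pow_succ_sub_pow_le {R : Type*} [CommRing R] (S : R[X]) (n : ℕ) :
    ((1 + S) ^ (n + 1) - S ^ (n + 1)).natDegree ≤ n * S.natDegree := by
  induction n with
  | zero => simp
  | succ n ih =>
    have hS : (1 + S).natDegree ≤ S.natDegree :=
      (natDegree_add_le _ _).trans (by rw [natDegree_one]; exact max_le (Nat.zero_le _) le_rfl)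
    rw [show (1 + S) ^ (n + 2) - S ^ (n + 2)
        = (1 + S) ^ (n + 1) + S * ((1 + S) ^ (n + 1) - S ^ (n + 1)) by ring]
    refine (natDegree_add_le _ _).trans (max_le ?_ ?_)
    · exact natDegree_pow_le_of_le _ hS |>.trans (by rw [mul_comm])
    · exact natDegree_mul_le.trans (by rw [add_mul, one_mul, add_comm]; gcongr)

lemma coeff_one_add_pow_succ {R : Type*} [CommRing R] (S : R[X]) {n k : ℕ}
    (hk : n * S.natDegree < k) : ((1 + S) ^ (n + 1)).coeff k = (S ^ (n + 1)).coeff k := by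
  rw [← sub_eq_zero, ← coeff_sub]
  exact coeff_eq_zero_of_natDegree_lt ((natDegree_one_add_pow_succ_sub_pow_le S n).trans_lt hk)

lemma sigmaPow_succ (P : Polynomial (ZMod 2)) (n : ℕ) :
    sigmaPow P (n + 1) = sigmaPow P n + P ^ (n + 1) :=
  Finset.sum_range_succ _ _

lemma isMonicOfDegree_sigmaPow {P : Polynomial (ZMod 2)} {d : ℕ} (hP : IsMonicOfDegree P d)
    (hd : d ≠ 0) (n : ℕ) : IsMonicOfDegree (sigmaPow P n) (d * n) := by
  induction n with
  | zero =>
    rw [mul_zero, isMonicOfDegree_zero_iff]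
    simp [sigmaPow]
  | succ n ih =>
    rw [sigmaPow_succ]
    exact (hP.pow _).add_left <| ih.natDegree_eq.trans_lt <|
      Nat.mul_lt_mul_of_pos_left (Nat.lt_succ_self n) (Nat.pos_of_ne_zero hd)

section Mersenne

variable {a b h l : ℕ}

lemma coeff_one_add_X_pow_mul_X_add_one_pow_pow_two_mul (hh : h ≠ 0) (hl : l < 2 * (a + b)) :
    ((1 + X ^ a * (X + 1) ^ b : (ZMod 2)[X]) ^ (2 * h)).coeff (2 * h * (a + b) - l)
      = ((2 * h * b).choose l : ZMod 2) := by
  obtain ⟨n, rfl⟩ : ∃ n, h = n + 1 := Nat.exists_eq_succ_of_ne_zero hh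
  have hdeg : ((X ^ a * (X + 1) ^ b : (ZMod 2)[X]) ^ 2).natDegree = (a + b) * 2 :=
    ((isMonicOfDegree_X_pow_mul_X_add_one_pow _ a b).pow 2).natDegree_eq
  have hN : 2 * (n + 1) * (a + b) = n * ((a + b) * 2) + 2 * (a + b) := by ring
  -- Squaring first matters: in `(1 + T) ^ (2h)` the term `2h T^(2h-1)` reaches down to degree
  -- `N - (a + b)`, while `(1 + T^2) ^ h - T^(2h)` stays below `N - 2(a + b)`.
  rw [pow_mul, add_pow_char, one_pow, coeff_one_add_pow_succ _ (by rw [hdeg]; omega),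
    show ((X ^ a * (X + 1) ^ b : (ZMod 2)[X]) ^ 2) ^ (n + 1)
      = X ^ (2 * (n + 1) * a) * (X + 1) ^ (2 * (n + 1) * b) by ring,
    show 2 * (n + 1) * (a + b) = 2 * (n + 1) * a + 2 * (n + 1) * b by ring,
    coeff_X_pow_mul_X_add_one_pow_sub (by nlinarith)]

lemma coeff_sigmaPow_one_add_X_pow_mul_X_add_one_pow (hab : a + b ≠ 0) (hh : h ≠ 0)
    (hl : l ≤ a + b) :
    (sigmaPow (1 + X ^ a * (X + 1) ^ b) (2 * h)).coeff (2 * h * (a + b) - l)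
      = ((2 * h * b).choose l : ZMod 2) + if l = a + b then 1 else 0 := by
  obtain ⟨n, hn⟩ : ∃ n, 2 * h = n + 1 := Nat.exists_eq_succ_of_ne_zero (by omega)
  have hσ := isMonicOfDegree_sigmaPow (isMonicOfDegree_one_add_X_pow_mul_X_add_one_pow hab) hab n
  have hN : 2 * h * (a + b) = (a + b) * n + (a + b) := by rw [hn]; ring
  rw [hn, sigmaPow_succ, coeff_add, ← hn,
    coeff_one_add_X_pow_mul_X_add_one_pow_pow_two_mul hh (by omega), add_comm]
  congr 1
  split_ifs with hlab
  · rw [show 2 * h * (a + b) - l = (a + b) * n by omega, ← hσ.natDegree_eq]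
    exact hσ.monic.coeff_natDegree
  · exact coeff_eq_zero_of_natDegree_lt (by rw [hσ.natDegree_eq]; omega)

variable {u v : ℕ}

lemma coeff_X_pow_mul_X_add_one_pow_add_sigmaPow_add_one_of_odd (hab : a + b ≠ 0) (hh : h ≠ 0)
    (huv : u + v = 2 * h * (a + b)) (hv : Even v) (hl : l ≤ a + b) (hodd : Odd l) :
    (X ^ u * (X + 1) ^ v + sigmaPow (1 + X ^ a * (X + 1) ^ b) (2 * h) + 1).coeff
      (2 * h * (a + b) - l) = if l = a + b then 1 else 0 := by
  have hN : a + b < 2 * h * (a + b) :=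
    lt_of_lt_of_le (by omega : a + b < 2 * (a + b)) (Nat.mul_le_mul_right _ (by omega))
  rw [coeff_add, coeff_add, coeff_one, if_neg (by omega), ← huv,
    coeff_X_pow_mul_X_add_one_pow_sub (by omega), huv,
    coeff_sigmaPow_one_add_X_pow_mul_X_add_one_pow hab hh hl,
    Nat.cast_choose_eq_zero_of_even_of_odd hv hodd,
    Nat.cast_choose_eq_zero_of_even_of_odd ((even_two_mul h).mul_right b) hodd]
  simp

lemma natDegree_X_pow_mul_X_add_one_pow_add_sigmaPow_add_one_le (hab : a + b ≠ 0)
    (huv : u + v = 2 * h * (a + b)) :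
    (X ^ u * (X + 1) ^ v + sigmaPow (1 + X ^ a * (X + 1) ^ b) (2 * h) + 1).natDegree
      ≤ 2 * h * (a + b) := by
  have hU := (isMonicOfDegree_X_pow_mul_X_add_one_pow (ZMod 2) u v).natDegree_eq
  have hσ := (isMonicOfDegree_sigmaPow
    (isMonicOfDegree_one_add_X_pow_mul_X_add_one_pow hab) hab (2 * h)).natDegree_eq
  refine natDegree_add_le_of_degree_le (natDegree_add_le_of_degree_le ?_ ?_) ?_
  · exact (hU.trans huv).le
  · exact (hσ.trans (mul_comm _ _)).le
  · exact natDegree_one.trans_le (Nat.zero_le _)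

end Mersenne

theorem stmt_7_general
    (h a b : ℕ) (hh : 2 ≤ h) (hab5 : 5 ≤ a + b)
    (M : Polynomial (ZMod 2)) (hM : M = 1 + X ^ a * (X + 1) ^ b)
    (J : Finset ℕ) (aj bj : ℕ → ℕ)
    (haj : ∀ j ∈ J, 1 ≤ aj j)
    (hfact : sigmaPow M (2 * h) = ∏ j ∈ J, (1 + X ^ aj j * (X + 1) ^ bj j))
    (u v : ℕ) (hu : u = ∑ j ∈ J, aj j) (hv : v = ∑ j ∈ J, bj j)
    (hveven : Even v)
    (U W : Polynomial (ZMod 2)) (c : ℕ)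
    (hU : U = X ^ u * (X + 1) ^ v)
    (hW : W = U + sigmaPow M (2 * h) + 1)
    (hc : c = 2 * h * (a + b) - W.natDegree)
    (hW0 : W ≠ 0) :
    (c < a + b → Even c) ∧ (a + b < c → Even (a + b)) := by
  subst hM hU
  have hab : a + b ≠ 0 := by omega
  have hσ := isMonicOfDegree_sigmaPow (isMonicOfDegree_one_add_X_pow_mul_X_add_one_pow hab) hab
    (2 * h)
  have huv : u + v = 2 * h * (a + b) := by
    rw [hu, hv, ← Finset.sum_add_distrib, ← natDegree_prod_one_add_X_pow_mul_X_add_one_pow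
      (R := ZMod 2) J aj bj fun j hj ↦ by have := haj j hj; omega, ← hfact, hσ.natDegree_eq,
      mul_comm]
  have hdeg : W.natDegree = 2 * h * (a + b) - c := by
    have := hW ▸ natDegree_X_pow_mul_X_add_one_pow_add_sigmaPow_add_one_le hab huv
    omega
  have hcoeff := fun l ↦ hW ▸
    coeff_X_pow_mul_X_add_one_pow_add_sigmaPow_add_one_of_odd (l := l) hab (by omega) huv hveven
  refine ⟨fun hlt ↦ ?_, fun hgt ↦ ?_⟩
  · by_contra hc_odd
    have := hcoeff c hlt.le (Nat.not_even_iff_odd.mp hc_odd)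
    rw [if_neg hlt.ne, ← hdeg] at this
    exact hW0 (leadingCoeff_eq_zero.mp this)
  · by_contra hab_odd
    have := hcoeff (a + b) le_rfl (Nat.not_even_iff_odd.mp hab_odd)
    rw [if_pos rfl, coeff_eq_zero_of_natDegree_lt (by omega)] at this
    exact zero_ne_one this

theorem stmt_7
    (h a b : ℕ) (hh : 2 ≤ h) (hp : Nat.Prime (2 * h + 1))
    (ha : 1 ≤ a) (hb : 1 ≤ b) (hab5 : 5 ≤ a + b)
    (M : Polynomial (ZMod 2)) (hM : M = 1 + X ^ a * (X + 1) ^ b)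
    (hMirr : Irreducible M)
    (J : Finset ℕ) (aj bj : ℕ → ℕ)
    (haj : ∀ j ∈ J, 1 ≤ aj j) (hbj : ∀ j ∈ J, 1 ≤ bj j)
    (hMjirr : ∀ j ∈ J, Irreducible (1 + X ^ aj j * (X + 1) ^ bj j : Polynomial (ZMod 2)))
    (hdistinct : ∀ i ∈ J, ∀ j ∈ J, i ≠ j →
      (1 + X ^ aj i * (X + 1) ^ bj i : Polynomial (ZMod 2)) ≠
        1 + X ^ aj j * (X + 1) ^ bj j)
    (hfact : sigmaPow M (2 * h) = ∏ j ∈ J, (1 + X ^ aj j * (X + 1) ^ bj j))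
    (u v : ℕ) (hu : u = ∑ j ∈ J, aj j) (hv : v = ∑ j ∈ J, bj j)
    (hueven : Even u) (hveven : Even v)
    (U W R : Polynomial (ZMod 2)) (c : ℕ)
    (hU : U = X ^ u * (X + 1) ^ v)
    (hW : W = U + sigmaPow M (2 * h) + 1)
    (hc : c = 2 * h * (a + b) - W.natDegree)
    (hR : R = sigmaPow M (2 * h - 1) + W)
    (hW0 : W ≠ 0) :
    (c < a + b → Even c) ∧ (a + b < c → Even (a + b)) :=
  stmt_7_general h a b hh hab5 M hM J aj bj haj hfact u v hu hv hveven U W c hU hW hc hW0
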